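/- Let e_θ = (cos θ, sin θ), φ with e_φ = -e_θ, and R(φ) the rotation matrix [[cos(φ/2), -sin(φ/2)],[sin(φ/2), cos(φ/2)]]. Then for all s ∈ ℝ, η ∈ ℝ², α ≥ 0, ε > 0, r > 0: (1/√r)·R(φ)⁻¹ · A(s√r·e_θ + √r·η + (α/√ε)e_θ^⊥) · R(φ) = -[[s + e_θ·η, e_θ^⊥·η + α/√(rε)],[e_θ^⊥·η + α/√(rε), -(s + e_θ·η)]], where A(w) = [[w₁,w₂],[w₂,-w₁]] and e_θ^⊥ = (-sin θ, cos θ). Consequently, if v solves i∂ₛv = A(sr·e_θ + η + (α/√ε)e_θ^⊥)v, then u(s,η) = R(φ)⁻¹ v(s/√r, √r η) solves the Landau–Zener system (1/i)∂ₛu = [[s + z₁, z₂],[z₂, -s - z₁]]u with z₁ = e_θ·η, z₂ = e_θ^⊥·η + α/√(rε). -/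

import Mathlib

open Matrix

/-- `A(w) = [[w₁, w₂], [w₂, -w₁]]`, viewed as a complex matrix with real entries. -/
noncomputable def Amat (w : ℝ × ℝ) : Matrix (Fin 2) (Fin 2) ℂ :=
  !![(w.1 : ℂ), (w.2 : ℂ); (w.2 : ℂ), -(w.1 : ℂ)]

/-- The half-angle rotation matrix `R(φ)`. -/
noncomputable def Rot (φ : ℝ) : Matrix (Fin 2) (Fin 2) ℂ :=
  !![(Real.cos (φ/2) : ℂ), -(Real.sin (φ/2) : ℂ);
     (Real.sin (φ/2) : ℂ), (Real.cos (φ/2) : ℂ)]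

/-- The Landau–Zener matrix `[[s + z₁, z₂], [z₂, -s - z₁]]`. -/
noncomputable def LZmat (s z₁ z₂ : ℝ) : Matrix (Fin 2) (Fin 2) ℂ :=
  !![((s + z₁ : ℝ) : ℂ), (z₂ : ℂ); (z₂ : ℂ), -((s + z₁ : ℝ) : ℂ)]

/-!
In complex notation `A(w)` is `z ↦ w z̄` and `R(φ)` is multiplication by `e^{iφ/2}`, so
`R(φ)⁻¹ A(w) R(φ) = A(e^{-iφ} w) = -A(e^{-iθ} w)`: conjugation reads off the coordinates of `w`
in the frame `(e_θ, e_θ^⊥)`, up to sign. Dividing by `√r` turns the model matrix into `-LZ`, and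
the evolution equation transfers by the chain rule for `s ↦ s/√r` and the constant change of
variables `R(φ)⁻¹`.
-/

lemma Amat_neg (w : ℝ × ℝ) : Amat (-w) = -Amat w := by
  ext i j; fin_cases i <;> fin_cases j <;> simp [Amat]

lemma Amat_smul (c : ℝ) (w : ℝ × ℝ) : Amat (c • w) = (c : ℂ) • Amat w := by
  ext i j; fin_cases i <;> fin_cases j <;> simp [Amat]

lemma LZmat_eq_Amat (s z₁ z₂ : ℝ) : LZmat s z₁ z₂ = Amat (s + z₁, z₂) := rfl

lemma Rot_mul_Rot (a b : ℝ) : Rot a * Rot b = Rot (a + b) := by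
  have hab : (a + b) / 2 = a / 2 + b / 2 := add_div a b 2
  ext i j; fin_cases i <;> fin_cases j <;>
    simp [Rot, Matrix.mul_apply, hab, Real.cos_add, Real.sin_add] <;> ring

lemma Rot_zero : Rot 0 = 1 := by
  ext i j; fin_cases i <;> fin_cases j <;> simp [Rot]

lemma Rot_neg_mul_Rot (φ : ℝ) : Rot (-φ) * Rot φ = 1 := by
  rw [Rot_mul_Rot, neg_add_cancel, Rot_zero]

lemma inv_Rot (φ : ℝ) : (Rot φ)⁻¹ = Rot (-φ) :=
  Matrix.inv_eq_left_inv (Rot_neg_mul_Rot φ)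

lemma isUnit_det_Rot (φ : ℝ) : IsUnit (Rot φ).det :=
  Matrix.isUnit_det_of_left_inverse (Rot_neg_mul_Rot φ)

lemma Rot_inv_mul_Amat_mul_Rot (φ : ℝ) (w : ℝ × ℝ) :
    (Rot φ)⁻¹ * Amat w * Rot φ =
      Amat (Real.cos φ * w.1 + Real.sin φ * w.2, -Real.sin φ * w.1 + Real.cos φ * w.2) := by
  obtain ⟨a, rfl⟩ : ∃ a, φ = 2 * a := ⟨φ / 2, by ring⟩
  rw [inv_Rot, Real.cos_two_mul', Real.sin_two_mul]
  have ha : -(2 * a) / 2 = -a := by ring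
  ext i j; fin_cases i <;> fin_cases j <;>
    simp [Rot, Amat, Matrix.mul_apply, ha] <;> ring

lemma HasDerivAt.const_mulVec {𝕜 𝕜' : Type*} [NontriviallyNormedField 𝕜]
    [NontriviallyNormedField 𝕜'] [CompleteSpace 𝕜'] [NormedAlgebra 𝕜 𝕜'] {m n : Type*}
    [Fintype m] [Fintype n] [DecidableEq n] (A : Matrix m n 𝕜') {u : 𝕜 → n → 𝕜'} {u' : n → 𝕜'} {x : 𝕜}
    (hu : HasDerivAt u u' x) : HasDerivAt (fun t => A *ᵥ u t) (A *ᵥ u') x :=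
  ((Matrix.mulVecLin A).toContinuousLinearMap.restrictScalars 𝕜).hasFDerivAt.comp_hasDerivAt x hu

lemma HasDerivAt.comp_div_const {𝕜 F : Type*} [NontriviallyNormedField 𝕜] [NormedAddCommGroup F]
    [NormedSpace 𝕜 F] {v : 𝕜 → F} {v' : F} {s c : 𝕜} (hv : HasDerivAt v v' (s / c)) :
    HasDerivAt (fun t => v (t / c)) (c⁻¹ • v') s := by
  simpa [Function.comp_def] using hv.scomp s ((hasDerivAt_id s).div_const c)

theorem hasDerivAt_inv_mulVec_of_conj {n : Type*} [Fintype n] [DecidableEq n] {P M L : Matrix n n ℂ} (hP : IsUnit P.det) {c : ℝ}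
    (hML : (c : ℂ)⁻¹ • (P⁻¹ * M * P) = -L) {v : ℝ → n → ℂ} {s : ℝ}
    (hv : HasDerivAt v (-Complex.I • M *ᵥ v (s / c)) (s / c)) :
    HasDerivAt (fun t => P⁻¹ *ᵥ v (t / c)) (Complex.I • L *ᵥ (P⁻¹ *ᵥ v (s / c))) s := by
  convert hv.comp_div_const.const_mulVec P⁻¹ using 1
  have hPP : P⁻¹ * M * P * P⁻¹ = P⁻¹ * M := Matrix.mul_nonsing_inv_cancel_right _ _ hP
  rw [← neg_neg L, ← hML, Matrix.mulVec_mulVec, Matrix.neg_mul, Matrix.smul_mul, hPP]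
  simp only [Matrix.neg_mulVec, Matrix.smul_mulVec, Matrix.mulVec_neg, Matrix.mulVec_smul,
    ← Matrix.mulVec_mulVec, ← Complex.coe_smul, neg_smul, smul_neg,
    smul_comm Complex.I, Complex.ofReal_inv]

lemma smul_Rot_inv_mul_Amat_mul_Rot_eq_neg_LZmat {θ φ r : ℝ} (hr : 0 < r)
    (hφ : Real.cos φ = -Real.cos θ ∧ Real.sin φ = -Real.sin θ) (α ε s : ℝ) (η : ℝ × ℝ) :
    ((Real.sqrt r)⁻¹ : ℂ) •
        ((Rot φ)⁻¹ * Amat ((s * Real.sqrt r) • (Real.cos θ, Real.sin θ) + Real.sqrt r • η +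
          (α / Real.sqrt ε) • (-Real.sin θ, Real.cos θ)) * Rot φ)
      = -LZmat s (Real.cos θ * η.1 + Real.sin θ * η.2)
          (-Real.sin θ * η.1 + Real.cos θ * η.2 + α / Real.sqrt (r * ε)) := by
  rw [Rot_inv_mul_Amat_mul_Rot, hφ.1, hφ.2, LZmat_eq_Amat, ← Amat_neg, ← Complex.ofReal_inv,
    ← Amat_smul, Real.sqrt_mul hr.le]
  have hsr : Real.sqrt r ≠ 0 := (Real.sqrt_pos.mpr hr).ne'
  congr 1
  ext <;>
    simp only [Prod.smul_mk, smul_eq_mul, mul_neg, Prod.fst_add, Prod.smul_fst, neg_mul,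
      Prod.snd_add, Prod.smul_snd, neg_neg, Prod.neg_mk, neg_add_rev] <;>
    field_simp
  · linear_combination (-(Real.sqrt r * s)) * Real.sin_sq_add_cos_sq θ
  · linear_combination (-α / Real.sqrt ε) * Real.sin_sq_add_cos_sq θ

theorem model_to_LandauZener_general (θ φ r α ε : ℝ) (hr : 0 < r)
    (hφ : Real.cos φ = -Real.cos θ ∧ Real.sin φ = -Real.sin θ) :
    let eθ : ℝ × ℝ := (Real.cos θ, Real.sin θ)
    let eθp : ℝ × ℝ := (-Real.sin θ, Real.cos θ)
    (∀ (s : ℝ) (η : ℝ × ℝ),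
      ((Real.sqrt r)⁻¹ : ℂ) •
          ((Rot φ)⁻¹ *
            Amat ((s * Real.sqrt r) • eθ + Real.sqrt r • η + (α / Real.sqrt ε) • eθp) *
            Rot φ)
        = -LZmat s (eθ.1 * η.1 + eθ.2 * η.2)
            (eθp.1 * η.1 + eθp.2 * η.2 + α / Real.sqrt (r * ε))) ∧
    (∀ (η : ℝ × ℝ) (v : ℝ → Fin 2 → ℂ),
      (∀ s : ℝ, HasDerivAt v
          ((-Complex.I) •
            (Amat ((s * r) • eθ + Real.sqrt r • η + (α / Real.sqrt ε) • eθp)).mulVec (v s)) s) →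
      ∀ s : ℝ, HasDerivAt (fun s' => ((Rot φ)⁻¹).mulVec (v (s' / Real.sqrt r)))
          (Complex.I •
            (LZmat s (eθ.1 * η.1 + eθ.2 * η.2)
              (eθp.1 * η.1 + eθp.2 * η.2 + α / Real.sqrt (r * ε))).mulVec
              (((Rot φ)⁻¹).mulVec (v (s / Real.sqrt r)))) s) := by
  intro eθ eθp
  have hconj := smul_Rot_inv_mul_Amat_mul_Rot_eq_neg_LZmat hr hφ α ε
  refine ⟨hconj, fun η v hv s => ?_⟩
  have hrescale : s / Real.sqrt r * r = s * Real.sqrt r := by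
    rw [div_mul_eq_mul_div, mul_div_assoc, Real.div_sqrt]
  refine hasDerivAt_inv_mulVec_of_conj (isUnit_det_Rot φ) (hconj s η) ?_
  simpa only [hrescale] using hv (s / Real.sqrt r)

/-- Conjugating `A(s√r e_θ + √r η + (α/√ε) e_θ^⊥)` by the half-angle rotation `R(φ)`
(with `e_φ = -e_θ`) and dividing by `√r` produces minus the Landau–Zener matrix with
`z₁ = e_θ·η` and `z₂ = e_θ^⊥·η + α/√(rε)`.  Consequently, if `v` solves the model
equation `i ∂ₛ v = A(s r e_θ + √r η + (α/√ε) e_θ^⊥) v`, then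
`u(s) = R(φ)⁻¹ v(s/√r)` solves the Landau–Zener system `(1/i) ∂ₛ u = LZ(s, z₁, z₂) u`. -/
theorem model_to_LandauZener (θ φ r α ε : ℝ) (hr : 0 < r) (hε : 0 < ε) (hα : 0 ≤ α)
    (hφ : Real.cos φ = -Real.cos θ ∧ Real.sin φ = -Real.sin θ) :
    let eθ : ℝ × ℝ := (Real.cos θ, Real.sin θ)
    let eθp : ℝ × ℝ := (-Real.sin θ, Real.cos θ)
    (∀ (s : ℝ) (η : ℝ × ℝ),
      ((Real.sqrt r)⁻¹ : ℂ) •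
          ((Rot φ)⁻¹ *
            Amat ((s * Real.sqrt r) • eθ + Real.sqrt r • η + (α / Real.sqrt ε) • eθp) *
            Rot φ)
        = -LZmat s (eθ.1 * η.1 + eθ.2 * η.2)
            (eθp.1 * η.1 + eθp.2 * η.2 + α / Real.sqrt (r * ε))) ∧
    (∀ (η : ℝ × ℝ) (v : ℝ → Fin 2 → ℂ),
      (∀ s : ℝ, HasDerivAt v
          ((-Complex.I) •
            (Amat ((s * r) • eθ + Real.sqrt r • η + (α / Real.sqrt ε) • eθp)).mulVec (v s)) s) →
      ∀ s : ℝ, HasDerivAt (fun s' => ((Rot φ)⁻¹).mulVec (v (s' / Real.sqrt r)))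
          (Complex.I •
            (LZmat s (eθ.1 * η.1 + eθ.2 * η.2)
              (eθp.1 * η.1 + eθp.2 * η.2 + α / Real.sqrt (r * ε))).mulVec
              (((Rot φ)⁻¹).mulVec (v (s / Real.sqrt r)))) s) :=
  model_to_LandauZener_general θ φ r α ε hr hφ
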